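/- arXiv:2504.08295 — 9 statements merged into one kernel-verified Lean document; each statement's English description precedes it below -/
import Mathlib

section
/- If F is a friend of 10 such that the exponent of every prime in the factorization of F is even (i.e., F is a perfect square), then it is not the case that for every prime p dividing F the half-exponent v_p(F)/2 is congruent to 1 modulo 3; that is, there exists a prime p dividing F with (v_p(F)/2) % 3 ≠ 1. -/
/-- `F` is a friend of `10`: a positive integer, different from `10`, with the same
abundancy index as `10`, i.e. `σ(F)/F = 9/5`, equivalently `5·σ(F) = 9·F`. -/
def FriendOf10 (F : ℕ) : Prop :=
  0 < F ∧ F ≠ 10 ∧ 5 * ArithmeticFunction.sigma 1 F = 9 * F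

private lemma geom_dvd (p k : ℕ) :
    (1 + p + p ^ 2) ∣ ∑ i ∈ Finset.range (3 * k), p ^ i := by
  induction k with
  | zero => simp
  | succ k ih =>
    have h3 : 3 * (k + 1) = 3 * k + 1 + 1 + 1 := by ring
    rw [h3, Finset.sum_range_succ, Finset.sum_range_succ, Finset.sum_range_succ]
    obtain ⟨c, hc⟩ := ih
    exact ⟨c + p ^ (3 * k), by rw [hc]; ring⟩

private lemma sigma_pp_dvd {p v : ℕ} (hp : p.Prime) (hv : 3 ∣ v + 1) :
    (1 + p + p ^ 2) ∣ ArithmeticFunction.sigma 1 (p ^ v) := by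
  rw [ArithmeticFunction.sigma_one_apply_prime_pow hp]
  obtain ⟨k, hk⟩ := hv
  rw [hk]
  exact geom_dvd p k

private lemma sigma_split {p F : ℕ} (hp : p.Prime) (hF : F ≠ 0) :
    ArithmeticFunction.sigma 1 F =
      ArithmeticFunction.sigma 1 (p ^ F.factorization p) *
        ArithmeticFunction.sigma 1 (ordCompl[p] F) := by
  conv_lhs => rw [← Nat.ordProj_mul_ordCompl_eq_self F p]
  exact ArithmeticFunction.isMultiplicative_sigma.map_mul_of_coprime
    ((Nat.coprime_ordCompl hp hF).pow_left _)

private lemma sigma_abundancy_le {d n : ℕ} (hd : d ∣ n) (hn : 0 < n) :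
    ArithmeticFunction.sigma 1 d * n ≤ ArithmeticFunction.sigma 1 n * d := by
  obtain ⟨c, rfl⟩ := hd
  rcases Nat.eq_zero_or_pos c with rfl | hc
  · simp at hn
  have key : (∑ e ∈ d.divisors, e) * c ≤ ∑ e ∈ (d * c).divisors, e := by
    rw [Finset.sum_mul]
    have himg : ∑ x ∈ d.divisors.image (· * c), x = ∑ e ∈ d.divisors, e * c := by
      refine Finset.sum_image ?_
      intro x hx y hy h
      exact Nat.eq_of_mul_eq_mul_right hc h
    rw [← himg]
    apply Finset.sum_le_sum_of_subset
    intro x hx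
    simp only [Finset.mem_image] at hx
    obtain ⟨e, he, rfl⟩ := hx
    rw [Nat.mem_divisors] at he ⊢
    exact ⟨mul_dvd_mul he.1 dvd_rfl, hn.ne'⟩
  calc ArithmeticFunction.sigma 1 d * (d * c)
      = ((∑ e ∈ d.divisors, e) * c) * d := by
        rw [ArithmeticFunction.sigma_one_apply]; ring
    _ ≤ (∑ e ∈ (d * c).divisors, e) * d := Nat.mul_le_mul_right d key
    _ = ArithmeticFunction.sigma 1 (d * c) * d := by
        rw [ArithmeticFunction.sigma_one_apply]

set_option maxHeartbeats 1000000 in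
theorem stmt_1 (F : ℕ) (hF : FriendOf10 F)
    (hsq : ∀ p : ℕ, p.Prime → Even (F.factorization p)) :
    ∃ p : ℕ, p.Prime ∧ p ∣ F ∧ (F.factorization p / 2) % 3 ≠ 1 := by
  obtain ⟨hFpos, -, hFeq⟩ := hF
  by_contra hcon
  push_neg at hcon
  have hF0 : F ≠ 0 := hFpos.ne'
  -- every prime exponent is ≥ 2 and ≡ 2 mod 3 shifted: 3 ∣ v + 1
  have key : ∀ p : ℕ, p.Prime → p ∣ F →
      3 ∣ F.factorization p + 1 ∧ 2 ≤ F.factorization p := by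
    intro p hp hpF
    obtain ⟨m, hm⟩ := hsq p hp
    have h1 := hcon p hp hpF
    omega
  -- (1+p+p²) divides σ F for every prime p ∣ F
  have chain : ∀ p : ℕ, p.Prime → p ∣ F →
      (1 + p + p ^ 2) ∣ ArithmeticFunction.sigma 1 F := by
    intro p hp hpF
    have h1 := sigma_pp_dvd hp (key p hp hpF).1
    have h2 : ArithmeticFunction.sigma 1 (p ^ F.factorization p) ∣
        ArithmeticFunction.sigma 1 F :=
      ⟨ArithmeticFunction.sigma 1 (ordCompl[p] F), sigma_split hp hF0⟩
    exact h1.trans h2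
  -- primes dividing σ F (other than 3) divide F
  have hdvd : ∀ q : ℕ, q.Prime → q ∣ ArithmeticFunction.sigma 1 F → q ≠ 3 → q ∣ F := by
    intro q hq hqs hq3
    have h9 : q ∣ 9 * F := by rw [← hFeq]; exact hqs.mul_left 5
    rcases (Nat.Prime.dvd_mul hq).mp h9 with h | h
    · exfalso
      have h3 : q ∣ 3 := hq.dvd_of_dvd_pow
        (show q ∣ 3 ^ 2 by rw [show (3:ℕ) ^ 2 = 9 by norm_num]; exact h)
      exact hq3 ((Nat.prime_dvd_prime_iff_eq hq (by norm_num)).mp h3)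
    · exact h
  -- 5 ∣ F
  have h5 : (5 : ℕ) ∣ F := by
    have h9 : (5 : ℕ) ∣ 9 * F := by rw [← hFeq]; exact Dvd.intro _ rfl
    rcases (Nat.Prime.dvd_mul (by norm_num : Nat.Prime 5)).mp h9 with h | h
    · norm_num at h
    · exact h
  -- chain: 31, 331, 7, 19 all divide F
  have h31 : (31 : ℕ) ∣ F :=
    hdvd 31 (by norm_num) ((by norm_num : (31:ℕ) ∣ 1 + 5 + 5 ^ 2).trans
      (chain 5 (by norm_num) h5)) (by norm_num)
  have h331 : (331 : ℕ) ∣ F :=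
    hdvd 331 (by norm_num) ((by norm_num : (331:ℕ) ∣ 1 + 31 + 31 ^ 2).trans
      (chain 31 (by norm_num) h31)) (by norm_num)
  have h7 : (7 : ℕ) ∣ F :=
    hdvd 7 (by norm_num) ((by norm_num : (7:ℕ) ∣ 1 + 331 + 331 ^ 2).trans
      (chain 331 (by norm_num) h331)) (by norm_num)
  have h19 : (19 : ℕ) ∣ F :=
    hdvd 19 (by norm_num) ((by norm_num : (19:ℕ) ∣ 1 + 7 + 7 ^ 2).trans
      (chain 7 (by norm_num) h7)) (by norm_num)
  -- 27 ∣ σ F, via the three coprime pieces at 7, 19, 31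
  have h27 : (27 : ℕ) ∣ ArithmeticFunction.sigma 1 F := by
    set m := ordCompl[7] F with hm_def
    have hm0 : m ≠ 0 := (Nat.ordCompl_pos 7 hF0).ne'
    have hm19 : m.factorization 19 = F.factorization 19 := by
      rw [hm_def, Nat.factorization_ordCompl, Finsupp.erase_ne (by norm_num)]
    have h19m : (19 : ℕ) ∣ m := Nat.dvd_of_factorization_pos (by
      rw [hm19]
      exact (Nat.Prime.factorization_pos_of_dvd (by norm_num) hF0 h19).ne')
    set m2 := ordCompl[19] m with hm2_def
    have hm20 : m2 ≠ 0 := (Nat.ordCompl_pos 19 hm0).ne'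
    have hm231 : m2.factorization 31 = F.factorization 31 := by
      rw [hm2_def, Nat.factorization_ordCompl, Finsupp.erase_ne (by norm_num),
        hm_def, Nat.factorization_ordCompl, Finsupp.erase_ne (by norm_num)]
    have e1 : ArithmeticFunction.sigma 1 F =
        ArithmeticFunction.sigma 1 (7 ^ F.factorization 7) *
          ArithmeticFunction.sigma 1 m := sigma_split (by norm_num) hF0
    have e2 : ArithmeticFunction.sigma 1 m =
        ArithmeticFunction.sigma 1 (19 ^ m.factorization 19) *
          ArithmeticFunction.sigma 1 m2 := sigma_split (by norm_num) hm0
    have hA : (3 : ℕ) ∣ ArithmeticFunction.sigma 1 (7 ^ F.factorization 7) :=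
      (by norm_num : (3:ℕ) ∣ 1 + 7 + 7 ^ 2).trans
        (sigma_pp_dvd (by norm_num) (key 7 (by norm_num) h7).1)
    have hB : (3 : ℕ) ∣ ArithmeticFunction.sigma 1 (19 ^ m.factorization 19) := by
      rw [hm19]
      exact (by norm_num : (3:ℕ) ∣ 1 + 19 + 19 ^ 2).trans
        (sigma_pp_dvd (by norm_num) (key 19 (by norm_num) h19).1)
    have hC : (3 : ℕ) ∣ ArithmeticFunction.sigma 1 m2 := by
      have e3 : ArithmeticFunction.sigma 1 m2 =
          ArithmeticFunction.sigma 1 (31 ^ m2.factorization 31) *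
            ArithmeticFunction.sigma 1 (ordCompl[31] m2) := sigma_split (by norm_num) hm20
      rw [e3]
      refine Dvd.dvd.mul_right ?_ _
      rw [hm231]
      exact (by norm_num : (3:ℕ) ∣ 1 + 31 + 31 ^ 2).trans
        (sigma_pp_dvd (by norm_num) (key 31 (by norm_num) h31).1)
    rw [e1, e2]
    obtain ⟨a, ha⟩ := hA
    obtain ⟨b, hb⟩ := hB
    obtain ⟨c, hc⟩ := hC
    exact ⟨a * (b * c), by rw [ha, hb, hc]; ring⟩
  -- hence 3 ∣ F
  have h3F : (3 : ℕ) ∣ F := by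
    obtain ⟨k, hk⟩ := h27
    rw [hk] at hFeq
    clear hcon hsq key chain hdvd hk h5 h31 h331 h7 h19 hF0
    exact ⟨5 * k, by omega⟩
  -- 3², 5², 7² all divide F, hence 11025 ∣ F
  have hsq_dvd : ∀ p : ℕ, p.Prime → p ∣ F → p ^ 2 ∣ F := by
    intro p hp hpF
    exact (pow_dvd_pow p (key p hp hpF).2).trans (Nat.ordProj_dvd F p)
  have h9F : (3 : ℕ) ^ 2 ∣ F := hsq_dvd 3 (by norm_num) h3F
  have h25F : (5 : ℕ) ^ 2 ∣ F := hsq_dvd 5 (by norm_num) h5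
  have h49F : (7 : ℕ) ^ 2 ∣ F := hsq_dvd 7 (by norm_num) h7
  have h225 : (3 ^ 2 * 5 ^ 2 : ℕ) ∣ F :=
    (Nat.Coprime.mul_dvd_of_dvd_of_dvd (by norm_num) h9F h25F)
  have h11025 : (11025 : ℕ) ∣ F := by
    have := Nat.Coprime.mul_dvd_of_dvd_of_dvd
      (show Nat.Coprime (3 ^ 2 * 5 ^ 2) (7 ^ 2) by norm_num) h225 h49F
    norm_num at this
    exact this
  -- compute σ 11025 = 22971
  have hsig : ArithmeticFunction.sigma 1 11025 = 22971 := by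
    have e : (11025 : ℕ) = (3 ^ 2 * 5 ^ 2) * 7 ^ 2 := by norm_num
    rw [e, ArithmeticFunction.isMultiplicative_sigma.map_mul_of_coprime (by norm_num),
      ArithmeticFunction.isMultiplicative_sigma.map_mul_of_coprime (by norm_num),
      ArithmeticFunction.sigma_one_apply_prime_pow (by norm_num : Nat.Prime 3),
      ArithmeticFunction.sigma_one_apply_prime_pow (by norm_num : Nat.Prime 5),
      ArithmeticFunction.sigma_one_apply_prime_pow (by norm_num : Nat.Prime 7)]
    simp [Finset.sum_range_succ]
  -- abundancy contradiction
  have hle := sigma_abundancy_le h11025 hFpos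
  rw [hsig] at hle
  set s := ArithmeticFunction.sigma 1 F with hs_def
  clear_value s
  clear hcon hsq key chain hdvd h27 h3F hsq_dvd h9F h25F h49F h225 h11025 hsig hs_def h5 h31 h331 h7 h19 hF0
  omega
end

section
/- Let a ≥ 1 be a positive integer and Q an odd positive integer coprime to 15, and suppose F = 5^(2a)·Q² is a friend of 10. Then σ(5^(2a)) + σ(Q²) ≡ 6 (mod 8) if and only if a is even. -/
lemma sigma_five_pow_mod8 (a : ℕ) :
    (ArithmeticFunction.sigma 1 (5 ^ (2 * a))) % 8 = (6 * a + 1) % 8 := by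
  induction a with
  | zero => norm_num [ArithmeticFunction.sigma_one_apply]
  | succ n ih =>
    have h5 : Nat.Prime 5 := by norm_num
    rw [ArithmeticFunction.sigma_one_apply_prime_pow h5] at ih ⊢
    have hstep : (2 * (n + 1) + 1) = (2 * n + 1) + 1 + 1 := by ring
    rw [hstep, Finset.sum_range_succ, Finset.sum_range_succ]
    have h1 : 5 ^ (2 * n + 1) % 8 = 5 := by
      rw [pow_succ, Nat.mul_mod, Nat.pow_mul, Nat.pow_mod]
      norm_num
    have h2 : 5 ^ (2 * n + 1 + 1) % 8 = 1 := by
      have h' : 2 * n + 1 + 1 = 2 * (n + 1) := by ring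
      rw [h', Nat.pow_mul, Nat.pow_mod]
      norm_num
    generalize hq : (5 : ℕ) ^ (2 * n + 1 + 1) = q at h2 ⊢
    generalize hp : (5 : ℕ) ^ (2 * n + 1) = p at h1 ⊢
    generalize hs : (∑ k ∈ Finset.range (2 * n + 1), (5 : ℕ) ^ k) = s at ih ⊢
    omega

theorem stmt_2 (a Q : ℕ) (ha : 1 ≤ a) (hQpos : 0 < Q) (hQodd : Odd Q)
    (hcop : Nat.Coprime Q 15) (hF : FriendOf10 (5 ^ (2 * a) * Q ^ 2)) :
    (ArithmeticFunction.sigma 1 (5 ^ (2 * a)) + ArithmeticFunction.sigma 1 (Q ^ 2)) % 8 = 6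
      ↔ Even a := by
  obtain ⟨hFpos, hFne, heq⟩ := hF
  have hcop5 : Nat.Coprime (5 ^ (2 * a)) (Q ^ 2) := by
    apply Nat.Coprime.pow
    exact (Nat.Coprime.coprime_dvd_right (by norm_num) hcop).symm
  have hmul : ArithmeticFunction.sigma 1 (5 ^ (2 * a) * Q ^ 2) =
      ArithmeticFunction.sigma 1 (5 ^ (2 * a)) * ArithmeticFunction.sigma 1 (Q ^ 2) :=
    ArithmeticFunction.isMultiplicative_sigma.map_mul_of_coprime hcop5
  rw [hmul] at heq
  have h5pow : 5 ^ (2 * a) % 8 = 1 := by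
    rw [Nat.pow_mul, Nat.pow_mod]; norm_num
  have hQ2 : Q ^ 2 % 8 = 1 := by
    obtain ⟨k, hk⟩ := hQodd
    subst hk
    have h' : (2 * k + 1) ^ 2 = 4 * (k * (k + 1)) + 1 := by ring
    rw [h']
    have h2 : k * (k + 1) % 2 = 0 := Nat.even_iff.mp (Nat.even_mul_succ_self k)
    omega
  set x := ArithmeticFunction.sigma 1 (5 ^ (2 * a)) with hxdef
  set y := ArithmeticFunction.sigma 1 (Q ^ 2) with hydef
  have hx : x % 8 = (6 * a + 1) % 8 := sigma_five_pow_mod8 a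
  have hRHS : (9 * (5 ^ (2 * a) * Q ^ 2)) % 8 = 1 := by
    rw [Nat.mul_mod, Nat.mul_mod (5 ^ (2 * a)), h5pow, hQ2]
  have hmodeq : (5 * ((x % 8) * (y % 8))) % 8 = (5 * (x * y)) % 8 :=
    (Nat.ModEq.refl 5).mul ((Nat.mod_modEq x 8).mul (Nat.mod_modEq y 8))
  have hxy : (5 * ((x % 8) * (y % 8))) % 8 = 1 := by
    rw [hmodeq, heq, hRHS]
  rw [Nat.even_iff]
  have hy8 : y % 8 < 8 := Nat.mod_lt _ (by norm_num)
  have h4 : a % 4 = 0 ∨ a % 4 = 1 ∨ a % 4 = 2 ∨ a % 4 = 3 := by omega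
  rcases h4 with h | h | h | h <;>
  · have hxv : x % 8 = 6 * (a % 4) % 8 + 1 := by omega
    rw [h] at hxv
    norm_num at hxv
    rw [hxv] at hxy
    omega
end

section
/- Let a ≥ 1 be a positive integer and Q an odd positive integer coprime to 15, and suppose F = 5^(2a)·Q² is a friend of 10. Then σ(5^(2a)) + σ(Q²) ≡ 2 (mod 8) if and only if a is odd. -/
lemma four_mul_sigma_pow5 (n : ℕ) :
    4 * ArithmeticFunction.sigma 1 (5 ^ n) + 1 = 5 ^ (n + 1) := by
  rw [ArithmeticFunction.sigma_one_apply_prime_pow (by norm_num : Nat.Prime 5)]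
  induction n with
  | zero => simp
  | succ n ih =>
    rw [Finset.sum_range_succ, Nat.mul_add, pow_succ 5 (n + 1)]
    omega

theorem stmt_3 (a Q : ℕ) (ha : 1 ≤ a) (hQpos : 0 < Q) (hQodd : Odd Q)
    (hcop : Nat.Coprime Q 15) (hF : FriendOf10 (5 ^ (2 * a) * Q ^ 2)) :
    (ArithmeticFunction.sigma 1 (5 ^ (2 * a)) + ArithmeticFunction.sigma 1 (Q ^ 2)) % 8 = 2
      ↔ Odd a := by
  set s5 := ArithmeticFunction.sigma 1 (5 ^ (2 * a)) with hs5
  set sQ := ArithmeticFunction.sigma 1 (Q ^ 2) with hsQ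
  have hcop5 : Nat.Coprime (5 ^ (2 * a)) (Q ^ 2) := by
    apply Nat.Coprime.pow
    exact (Nat.Coprime.coprime_dvd_right (by norm_num : (5:ℕ) ∣ 15) hcop).symm
  have hkey : 5 * (s5 * sQ) = 9 * (5 ^ (2 * a) * Q ^ 2) := by
    have hm := (ArithmeticFunction.isMultiplicative_sigma (k := 1)).2 hcop5
    rw [hs5, hsQ, ← hm]
    exact hF.2.2
  -- Q^2 % 8 = 1
  have hQ8 : Q ^ 2 % 8 = 1 := by
    obtain ⟨k, hk⟩ := hQodd
    obtain ⟨m, hm⟩ := Nat.even_mul_succ_self k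
    have : Q ^ 2 = 4 * (k * (k + 1)) + 1 := by rw [hk]; ring
    omega
  -- 5^(2a) % 8 = 1
  have h58 : 5 ^ (2 * a) % 8 = 1 := by
    rw [pow_mul, Nat.pow_mod]; norm_num
  -- s5 mod 8 via 4*s5 + 1 = 5^(2a+1)
  have hgeo := four_mul_sigma_pow5 (2 * a)
  rw [← hs5] at hgeo
  have h5mod : 5 ^ (2 * a + 1) % 32 = (5 * 25 ^ (a % 4)) % 32 := by
    have h1 : (5:ℕ) ^ (2 * a + 1) = 5 * ((25 ^ 4) ^ (a / 4) * 25 ^ (a % 4)) := by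
      rw [← pow_mul, ← pow_add, Nat.div_add_mod, pow_succ', pow_mul]
      norm_num
    have h2 : ((5 ^ (2 * a + 1) : ℕ) : ZMod 32) = ((5 * 25 ^ (a % 4) : ℕ) : ZMod 32) := by
      rw [h1]
      push_cast
      have h3 : ((390625 : ZMod 32)) = 1 := by decide
      rw [h3, one_pow, one_mul]
    exact (ZMod.natCast_eq_natCast_iff' _ _ _).mp h2
  -- key equation mod 8
  have hmod : (5 * (s5 % 8 * (sQ % 8) % 8)) % 8 = 1 := by
    have h2 : (5 * (s5 * sQ)) % 8 = (9 * (5 ^ (2 * a) * Q ^ 2)) % 8 := by rw [hkey]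
    rw [Nat.mul_mod 9, Nat.mul_mod (5 ^ (2*a)), hQ8, h58, Nat.mul_mod 5,
      Nat.mul_mod s5] at h2
    simpa using h2
  rw [Nat.odd_iff, Nat.add_mod]
  have ht : sQ % 8 < 8 := Nat.mod_lt _ (by norm_num)
  have hx : a % 4 = 0 ∨ a % 4 = 1 ∨ a % 4 = 2 ∨ a % 4 = 3 := by omega
  rcases hx with h | h | h | h
  · rw [h] at h5mod; norm_num at h5mod
    have hr : s5 % 8 = 1 := by omega
    rw [hr] at hmod ⊢; omega
  · rw [h] at h5mod; norm_num at h5mod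
    have hr : s5 % 8 = 7 := by omega
    rw [hr] at hmod ⊢; omega
  · rw [h] at h5mod; norm_num at h5mod
    have hr : s5 % 8 = 5 := by omega
    rw [hr] at hmod ⊢; omega
  · rw [h] at h5mod; norm_num at h5mod
    have hr : s5 % 8 = 3 := by omega
    rw [hr] at hmod ⊢; omega
end

section
/- If F is a friend of 10 and F is a perfect square (i.e., the exponent of every prime in its factorization is even), then 729·F > 625·9^(ω(F)), where ω(F) denotes the number of distinct prime divisors of F; equivalently, F > 625·9^(ω(F)−3). -/
/-!
Every exponent of a square is even, so each factor `1 + p + ⋯ + p^(2b)` of `σ(F)` is odd, hence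
`σ(F)` is odd and `9F = 5σ(F)` forces `F` to be odd. Then every prime power `p^a ∥ F` has `p ≥ 3`
and `a ≥ 2`, so `p^a ≥ 9` and `F ≥ 9^ω(F) > (625/729)·9^ω(F)`.
-/

open ArithmeticFunction Finset
open scoped ArithmeticFunction.sigma

theorem Nat.odd_geom_sum_of_even {m : ℕ} (hm : Even m) (p : ℕ) :
    Odd (∑ k ∈ range (m + 1), p ^ k) := by
  rcases p.even_or_odd with hp | hp
  · rw [sum_range_succ', pow_zero]
    exact (even_sum _ fun k _ => hp.pow_of_ne_zero k.succ_ne_zero).add_one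
  · rw [odd_sum_iff_odd_card_odd, filter_true_of_mem fun k _ => hp.pow, card_range]
    exact hm.add_one

theorem ArithmeticFunction.odd_sigma_one_of_even_factorization {n : ℕ} (hn : n ≠ 0)
    (h : ∀ p : ℕ, p.Prime → Even (n.factorization p)) : Odd (σ 1 n) := by
  rw [sigma_one_apply, Nat.sum_divisors hn]
  exact prod_induction _ Odd (fun _ _ => Odd.mul) odd_one fun p hp =>
    Nat.odd_geom_sum_of_even (h p (Nat.prime_of_mem_primeFactors hp)) p

theorem Nat.pow_card_primeFactors_le {n a : ℕ} (hn : n ≠ 0)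
    (h : ∀ p ∈ n.primeFactors, a ≤ p ^ n.factorization p) : a ^ #n.primeFactors ≤ n :=
  calc a ^ #n.primeFactors = ∏ _p ∈ n.primeFactors, a := (prod_const a).symm
    _ ≤ ∏ p ∈ n.primeFactors, p ^ n.factorization p := prod_le_prod' h
    _ = n := (Nat.prod_primeFactors_pow_factorization hn).symm

theorem FriendOf10.odd_of_even_factorization {F : ℕ} (hF : FriendOf10 F)
    (hsq : ∀ p : ℕ, p.Prime → Even (F.factorization p)) : Odd F := by
  obtain ⟨hpos, -, hσ⟩ := hF
  have h9F : Odd (9 * F) := hσ ▸ (by decide : Odd 5).mul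
    (odd_sigma_one_of_even_factorization hpos.ne' hsq)
  exact (Nat.odd_mul.mp h9F).2

theorem stmt_5 (F : ℕ) (hF : FriendOf10 F)
    (hsq : ∀ p : ℕ, p.Prime → Even (F.factorization p)) :
    729 * F > 625 * 9 ^ F.primeFactors.card := by
  have hF0 : F ≠ 0 := hF.1.ne'
  have hodd : Odd F := hF.odd_of_even_factorization hsq
  have hbound : 9 ^ #F.primeFactors ≤ F := Nat.pow_card_primeFactors_le hF0 fun p hp => by
    have hprime := Nat.prime_of_mem_primeFactors hp
    have hp3 : 3 ≤ p := hprime.odd_iff.mp (hodd.of_dvd_nat (Nat.dvd_of_mem_primeFactors hp))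
    have ha : 2 ≤ F.factorization p := by
      have := Nat.pos_of_ne_zero (Finsupp.mem_support_iff.mp (F.support_factorization ▸ hp))
      obtain ⟨b, hb⟩ := hsq p hprime
      omega
    calc 9 = 3 ^ 2 := rfl
      _ ≤ p ^ F.factorization p := pow_le_pow hp3 (by omega) ha
  have : 0 < 9 ^ #F.primeFactors := by positivity
  omega
end

section
/- If F is a friend of 10, then 9 divides σ(F) but 27 does not divide σ(F) (i.e., 9 exactly divides σ(F)). -/
open ArithmeticFunction Finset

/-- Abundancy monotonicity: if `d ∣ F` then `σ(d)/d ≤ σ(F)/F`. -/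
lemma sigma_div_mono {d F : ℕ} (hF : 0 < F) (hd : d ∣ F) :
    sigma 1 d * F ≤ sigma 1 F * d := by
  have hd0 : 0 < d := Nat.pos_of_dvd_of_pos hd hF
  have hq : 0 < F / d := Nat.div_pos (Nat.le_of_dvd hF hd) hd0
  have himg : d.divisors.image (fun c => c * (F / d)) ⊆ F.divisors := by
    intro x hx
    simp only [Finset.mem_image] at hx
    obtain ⟨c, hc, rfl⟩ := hx
    rw [Nat.mem_divisors] at hc ⊢
    refine ⟨?_, hF.ne'⟩
    calc c * (F / d) ∣ d * (F / d) := mul_dvd_mul hc.1 dvd_rfl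
      _ = F := Nat.mul_div_cancel' hd
  have hinj : Set.InjOn (fun c => c * (F / d)) d.divisors := by
    intro x _ y _ h
    exact Nat.eq_of_mul_eq_mul_right hq h
  have hsum : ∑ c ∈ d.divisors, c * (F / d) ≤ ∑ e ∈ F.divisors, e := by
    have h2 : ∑ x ∈ d.divisors.image (fun c => c * (F / d)), x
        = ∑ c ∈ d.divisors, c * (F / d) :=
      Finset.sum_image (fun x hx y hy h => hinj hx hy h)
    rw [← h2]
    exact Finset.sum_le_sum_of_subset himg
  have h1 : sigma 1 d * F = (∑ c ∈ d.divisors, c * (F / d)) * d := by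
    rw [sigma_one_apply, Finset.sum_mul, Finset.sum_mul]
    refine Finset.sum_congr rfl fun c _ => ?_
    rw [mul_assoc, Nat.div_mul_cancel hd]
  rw [h1, sigma_one_apply]
  exact Nat.mul_le_mul_right d hsum

lemma sigma_pp_mod_two {p : ℕ} (hp : p.Prime) (hodd : p % 2 = 1) (a : ℕ) :
    sigma 1 (p ^ a) % 2 = (a + 1) % 2 := by
  rw [sigma_one_apply_prime_pow hp, Finset.sum_nat_mod]
  have h3 : ∀ k, p ^ k % 2 = 1 := by
    intro k
    simp [Nat.pow_mod, hodd]
  simp only [h3, Finset.sum_const, Finset.card_range, smul_eq_mul, mul_one]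

set_option maxHeartbeats 1000000 in
theorem stmt_7 (F : ℕ) (hF : FriendOf10 F) :
    9 ∣ ArithmeticFunction.sigma 1 F ∧ ¬ (27 ∣ ArithmeticFunction.sigma 1 F) := by
  obtain ⟨hFpos, hne, heq⟩ := hF
  have h9 : (9 : ℕ) ∣ sigma 1 F := by
    have : (9 : ℕ) ∣ 5 * sigma 1 F := by rw [heq]; exact dvd_mul_right 9 F
    exact (Nat.coprime_comm.mp (by norm_num : Nat.Coprime 5 9)).dvd_of_dvd_mul_left this
  refine ⟨h9, ?_⟩
  intro h27
  -- 5 ∣ F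
  have h5F : (5 : ℕ) ∣ F := by
    have h : (5 : ℕ) ∣ 9 * F := by rw [← heq]; exact dvd_mul_right 5 (sigma 1 F)
    exact (by norm_num : Nat.Coprime 5 9).dvd_of_dvd_mul_left (mul_comm 9 F ▸ h)
  -- 3 ∣ F
  obtain ⟨k, hk⟩ := h27
  have h15 : F = 15 * k := by clear * - heq hk; omega
  have h3F : (3 : ℕ) ∣ F := ⟨5 * k, by rw [h15]; ring⟩
  -- F is odd
  have hFodd : ¬ (2 ∣ F) := by
    intro h2F
    have h6 : (6 : ℕ) ∣ F :=
      (by norm_num : Nat.Coprime 2 3).mul_dvd_of_dvd_of_dvd h2F h3F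
    have h30 : (30 : ℕ) ∣ F :=
      (by norm_num : Nat.Coprime 6 5).mul_dvd_of_dvd_of_dvd h6 h5F
    have hmono := sigma_div_mono hFpos h30
    have hs30 : sigma 1 30 = 72 := by decide
    rw [hs30] at hmono
    clear * - heq hFpos hmono
    omega
  have hσodd : sigma 1 F % 2 = 1 := by clear * - heq hFodd; omega
  -- exponents of odd primes dividing F are even
  have hexp : ∀ p : ℕ, p.Prime → p % 2 = 1 → p ∣ F → 2 ∣ F.factorization p := by
    intro p hp hpodd hpF
    have hsplit : p ^ F.factorization p * (F / p ^ F.factorization p) = F :=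
      Nat.ordProj_mul_ordCompl_eq_self F p
    have hndvd : ¬ p ∣ (F / p ^ F.factorization p) := Nat.not_dvd_ordCompl hp hFpos.ne'
    have hcop : Nat.Coprime (p ^ F.factorization p) (F / p ^ F.factorization p) :=
      Nat.Coprime.pow_left _ ((Nat.Prime.coprime_iff_not_dvd hp).mpr hndvd)
    have hmul := (isMultiplicative_sigma (k := 1)).map_mul_of_coprime hcop
    rw [hsplit] at hmul
    have hparity := sigma_pp_mod_two hp hpodd (F.factorization p)
    generalize hgen : F.factorization p = a at hparity hmul ⊢
    rcases Nat.even_or_odd a with he | ho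
    · exact he.two_dvd
    · exfalso
      obtain ⟨t, rfl⟩ := ho
      have h1 : sigma 1 (p ^ (2 * t + 1)) % 2 = 0 := by
        rw [hparity]; clear * -; omega
      have h2 : sigma 1 F % 2 = 0 := by
        rw [hmul, Nat.mul_mod, h1]
        simp
      rw [h2] at hσodd
      exact absurd hσodd (by norm_num)
  have h3e := hexp 3 (by norm_num) rfl h3F
  have h5e := hexp 5 (by norm_num) rfl h5F
  have h3pos : 0 < F.factorization 3 :=
    Nat.Prime.factorization_pos_of_dvd (by norm_num) hFpos.ne' h3F
  have h5pos : 0 < F.factorization 5 :=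
    Nat.Prime.factorization_pos_of_dvd (by norm_num) hFpos.ne' h5F
  have h2le3 : 2 ≤ F.factorization 3 := by
    generalize F.factorization 3 = a at h3e h3pos ⊢
    clear * - h3e h3pos; omega
  have h2le5 : 2 ≤ F.factorization 5 := by
    generalize F.factorization 5 = b at h5e h5pos ⊢
    clear * - h5e h5pos; omega
  have h9F : (9 : ℕ) ∣ F :=
    (pow_dvd_pow 3 h2le3).trans (Nat.ordProj_dvd F 3)
  have h25F : (25 : ℕ) ∣ F :=
    (pow_dvd_pow 5 h2le5).trans (Nat.ordProj_dvd F 5)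
  -- exponent of 3 is exactly 2
  have ha2 : F.factorization 3 = 2 := by
    by_contra hne3
    have h4le : 4 ≤ F.factorization 3 := by
      generalize F.factorization 3 = a at h3e h3pos hne3 ⊢
      clear * - h3e h3pos hne3; omega
    have h81 : (81 : ℕ) ∣ F := (pow_dvd_pow 3 h4le).trans (Nat.ordProj_dvd F 3)
    have h2025 : (2025 : ℕ) ∣ F :=
      (by norm_num : Nat.Coprime 81 25).mul_dvd_of_dvd_of_dvd h81 h25F
    have hmono := sigma_div_mono hFpos h2025
    have hs : sigma 1 2025 = 3751 := by
      have e1 : sigma 1 (3 ^ 4) = 121 := by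
        rw [sigma_one_apply_prime_pow (by norm_num)]; decide
      have e2 : sigma 1 (5 ^ 2) = 31 := by
        rw [sigma_one_apply_prime_pow (by norm_num)]; decide
      rw [show (2025 : ℕ) = 3 ^ 4 * 5 ^ 2 by norm_num,
        isMultiplicative_sigma.map_mul_of_coprime
          (by norm_num : Nat.Coprime (3 ^ 4) (5 ^ 2)), e1, e2]
      norm_num
    rw [hs] at hmono
    clear * - heq hFpos hmono
    omega
  have hb2 : F.factorization 5 = 2 := by
    by_contra hne5
    have h4le : 4 ≤ F.factorization 5 := by
      generalize F.factorization 5 = b at h5e h5pos hne5 ⊢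
      clear * - h5e h5pos hne5; omega
    have h625 : (625 : ℕ) ∣ F := (pow_dvd_pow 5 h4le).trans (Nat.ordProj_dvd F 5)
    have h5625 : (5625 : ℕ) ∣ F :=
      (by norm_num : Nat.Coprime 9 625).mul_dvd_of_dvd_of_dvd h9F h625
    have hmono := sigma_div_mono hFpos h5625
    have hs : sigma 1 5625 = 10153 := by
      have e1 : sigma 1 (3 ^ 2) = 13 := by
        rw [sigma_one_apply_prime_pow (by norm_num)]; decide
      have e2 : sigma 1 (5 ^ 4) = 781 := by
        rw [sigma_one_apply_prime_pow (by norm_num)]; decide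
      rw [show (5625 : ℕ) = 3 ^ 2 * 5 ^ 4 by norm_num,
        isMultiplicative_sigma.map_mul_of_coprime
          (by norm_num : Nat.Coprime (3 ^ 2) (5 ^ 4)), e1, e2]
      norm_num
    rw [hs] at hmono
    clear * - heq hFpos hmono
    omega
  -- write F = 9 * m, m = 25 * u with u coprime to 15
  obtain ⟨m, key3, hnd3, hb2m⟩ :
      ∃ m, (3:ℕ) ^ 2 * m = F ∧ ¬ (3:ℕ) ∣ m ∧ m.factorization 5 = 2 := by
    refine ⟨F / 3 ^ 2, ?_, ?_, ?_⟩
    · have h := Nat.ordProj_mul_ordCompl_eq_self F 3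
      rwa [ha2] at h
    · have h := Nat.not_dvd_ordCompl (by norm_num : Nat.Prime 3) hFpos.ne'
      rwa [ha2] at h
    · have h := Nat.factorization_ordCompl F 3
      rw [ha2] at h
      rw [h, Finsupp.erase_ne (by norm_num : (5:ℕ) ≠ 3), hb2]
  have hmpos : 0 < m := by
    clear * - key3 hFpos
    rcases Nat.eq_zero_or_pos m with h | h
    · subst h; simp at key3; omega
    · exact h
  obtain ⟨u, key5, hnd5⟩ : ∃ u, (5:ℕ) ^ 2 * u = m ∧ ¬ (5:ℕ) ∣ u := by
    refine ⟨m / 5 ^ 2, ?_, ?_⟩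
    · have h := Nat.ordProj_mul_ordCompl_eq_self m 5
      rwa [hb2m] at h
    · have h := Nat.not_dvd_ordCompl (by norm_num : Nat.Prime 5) hmpos.ne'
      rwa [hb2m] at h
  have hupos : 0 < u := by
    clear * - key5 hmpos
    rcases Nat.eq_zero_or_pos u with h | h
    · subst h; simp at key5; omega
    · exact h
  -- σ F = 403 * σ u
  have hcop3 : Nat.Coprime (3 ^ 2) m :=
    Nat.Coprime.pow_left 2 ((Nat.Prime.coprime_iff_not_dvd (by norm_num)).mpr hnd3)
  have hcop5 : Nat.Coprime (5 ^ 2) u :=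
    Nat.Coprime.pow_left 2 ((Nat.Prime.coprime_iff_not_dvd (by norm_num)).mpr hnd5)
  have hs3 : sigma 1 (3 ^ 2) = 13 := by
    rw [sigma_one_apply_prime_pow (by norm_num)]; decide
  have hs5 : sigma 1 (5 ^ 2) = 31 := by
    rw [sigma_one_apply_prime_pow (by norm_num)]; decide
  have hσF : sigma 1 F = 13 * (31 * sigma 1 u) := by
    have h1 := (isMultiplicative_sigma (k := 1)).map_mul_of_coprime hcop3
    rw [key3] at h1
    have h2 := (isMultiplicative_sigma (k := 1)).map_mul_of_coprime hcop5
    rw [key5] at h2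
    rw [h1, h2, hs3, hs5]
  have heq' : 403 * sigma 1 u = 405 * u := by
    rw [hσF] at heq
    have key3' : 9 * m = F := by rw [← key3]; norm_num
    have key5' : 25 * u = m := by rw [← key5]; norm_num
    clear * - heq key3' key5'
    generalize sigma 1 u = s at heq ⊢
    omega
  -- 13 ∣ u leads to a contradiction
  have h403u : (403 : ℕ) ∣ u := by
    have hd : (403 : ℕ) ∣ 405 * u := ⟨sigma 1 u, heq'.symm⟩
    exact (by norm_num : Nat.Coprime 403 405).dvd_of_dvd_mul_left (mul_comm 405 u ▸ hd)
  have h13u : (13 : ℕ) ∣ u := dvd_trans ⟨31, rfl⟩ h403u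
  have hmono := sigma_div_mono hupos h13u
  have hs13 : sigma 1 13 = 14 := by decide
  rw [hs13] at hmono
  clear * - heq' hupos hmono
  omega
end

section
/- If F is a friend of 10 such that the exponent of every prime in the factorization of F is even (i.e., F is a perfect square), then there exists a prime p dividing F with v_p(F) ≥ 4, i.e., p⁴ divides F; in other words, not all the half-exponents a_i in F = ∏ p_i^(2a_i) are equal to 1. -/
/-- `x² + x + 1` is never divisible by 5. -/
lemma five_not_dvd_quad (p : ℕ) : ¬ (5 ∣ 1 + p + p ^ 2) := by
  intro h
  have h0 : ((1 + p + p ^ 2 : ℕ) : ZMod 5) = 0 :=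
    (ZMod.natCast_eq_zero_iff _ _).mpr h
  push_cast at h0
  revert h0
  generalize (p : ZMod 5) = x
  revert x
  decide

theorem stmt_8 (F : ℕ) (hF : FriendOf10 F)
    (hsq : ∀ p : ℕ, p.Prime → Even (F.factorization p)) :
    ∃ p : ℕ, p.Prime ∧ p ^ 4 ∣ F := by
  obtain ⟨hpos, -, heq⟩ := hF
  by_contra hcon
  push_neg at hcon
  -- every prime exponent of F is exactly 2 (for primes dividing F)
  have hexp : ∀ p : ℕ, p.Prime → p ∣ F → F.factorization p = 2 := by
    intro p hp hdvd
    have h1 : 1 ≤ F.factorization p :=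
      (Nat.Prime.dvd_iff_one_le_factorization hp hpos.ne').mp hdvd
    have h4 : F.factorization p < 4 := by
      by_contra hge
      push_neg at hge
      exact hcon p hp ((pow_dvd_pow p hge).trans (Nat.ordProj_dvd F p))
    obtain ⟨k, hk⟩ := hsq p hp
    omega
  -- 5 ∣ F
  have h5F : (5 : ℕ) ∣ F := by
    have h9 : (5 : ℕ) ∣ 9 * F := heq ▸ Dvd.intro _ rfl
    rcases (Nat.Prime.dvd_mul (by norm_num)).mp h9 with h | h
    · omega
    · exact h
  -- 25 ∣ F
  have h25 : (5 : ℕ) ^ 2 ∣ F := by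
    rw [Nat.Prime.pow_dvd_iff_le_factorization (by norm_num) hpos.ne']
    rw [hexp 5 (by norm_num) h5F]
  -- hence 5 ∣ σ F
  have h5sig : (5 : ℕ) ∣ ArithmeticFunction.sigma 1 F := by
    obtain ⟨m, hm⟩ := h25
    have : 5 * ArithmeticFunction.sigma 1 F = 5 * (45 * m) := by
      rw [heq, hm]; ring
    have := Nat.eq_of_mul_eq_mul_left (by norm_num) this
    exact this ▸ ⟨9 * m, by ring⟩
  -- but σ F = ∏ (1 + p + p²), not divisible by 5
  have hsig : ArithmeticFunction.sigma 1 F =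
      ∏ p ∈ F.primeFactors, (1 + p + p ^ 2) := by
    rw [ArithmeticFunction.sigma_one_apply, Nat.sum_divisors hpos.ne']
    refine Finset.prod_congr rfl fun p hp => ?_
    have hpp := Nat.prime_of_mem_primeFactors hp
    rw [hexp p hpp (Nat.dvd_of_mem_primeFactors hp)]
    rw [Finset.sum_range_succ, Finset.sum_range_succ, Finset.sum_range_one]
    ring
  rw [hsig] at h5sig
  obtain ⟨p, -, hdvd⟩ :=
    (Prime.dvd_finset_prod_iff (Nat.prime_iff.mp (by norm_num)) _).mp h5sig
  exact five_not_dvd_quad p hdvd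
end

section
/- Let Q be an odd positive integer coprime to 15, and suppose F = 5²·Q² is a friend of 10. Then σ(Q²) ≡ 3 (mod 8). -/
theorem stmt_17 (Q : ℕ) (hQpos : 0 < Q) (hQodd : Odd Q)
    (hcop : Nat.Coprime Q 15) (hF : FriendOf10 (5 ^ 2 * Q ^ 2)) :
    ArithmeticFunction.sigma 1 (Q ^ 2) % 8 = 3 := by
  obtain ⟨-, -, h⟩ := hF
  have h5 : Nat.Coprime 5 Q := (hcop.coprime_dvd_right (by norm_num)).symm
  have hc : Nat.Coprime (5 ^ 2) (Q ^ 2) := Nat.Coprime.pow 2 2 h5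
  rw [ArithmeticFunction.isMultiplicative_sigma.map_mul_of_coprime hc] at h
  have h25 : ArithmeticFunction.sigma 1 (5 ^ 2) = 31 := by decide
  rw [h25] at h
  obtain ⟨k, hk⟩ := hQodd
  obtain ⟨m, hm⟩ := Nat.even_mul_succ_self k
  have hq : Q ^ 2 = 8 * m + 1 := by subst hk; nlinarith [hm]
  omega
end

section
/- Let Q be an odd positive integer coprime to 15, and suppose F = 5²·Q² is a friend of 10. Then 45 divides σ(Q²). -/
theorem stmt_18 (Q : ℕ) (hQpos : 0 < Q) (hQodd : Odd Q)
    (hcop : Nat.Coprime Q 15) (hF : FriendOf10 (5 ^ 2 * Q ^ 2)) :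
    45 ∣ ArithmeticFunction.sigma 1 (Q ^ 2) := by
  obtain ⟨-, -, h⟩ := hF
  have hc : Nat.Coprime (5 ^ 2) (Q ^ 2) := by
    have : Nat.Coprime Q 5 := Nat.Coprime.coprime_dvd_right (by norm_num) hcop
    exact Nat.Coprime.pow 2 2 this.symm
  rw [ArithmeticFunction.isMultiplicative_sigma.map_mul_of_coprime hc] at h
  have h25 : ArithmeticFunction.sigma 1 (5 ^ 2) = 31 := by decide
  rw [h25] at h
  have h31 : 31 * ArithmeticFunction.sigma 1 (Q ^ 2) = 45 * Q ^ 2 := by omega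
  have : 45 ∣ 31 * ArithmeticFunction.sigma 1 (Q ^ 2) := ⟨Q ^ 2, h31⟩
  exact (Nat.Coprime.dvd_of_dvd_mul_left (by norm_num) this)
end

section
/- Let Q be an odd positive integer coprime to 15, and suppose F = 5²·Q² is a friend of 10. Then Q² ≡ 217 (mod 248), and consequently F ≡ 5425 (mod 6200); that is, there exists a nonnegative integer t with Q² = 248t + 217 and F = 6200t + 5425. -/
theorem stmt_19 (Q : ℕ) (hQpos : 0 < Q) (hQodd : Odd Q)
    (hcop : Nat.Coprime Q 15) (hF : FriendOf10 (5 ^ 2 * Q ^ 2)) :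
    ∃ t : ℕ, Q ^ 2 = 248 * t + 217 ∧ 5 ^ 2 * Q ^ 2 = 6200 * t + 5425 := by
  obtain ⟨-, -, hsig⟩ := hF
  -- coprimality of 5^2 and Q^2
  have hc5 : Nat.Coprime Q 5 := Nat.Coprime.coprime_dvd_right (by norm_num) hcop
  have hc : Nat.Coprime (5 ^ 2) (Q ^ 2) := Nat.Coprime.pow 2 2 hc5.symm
  have hmul := (ArithmeticFunction.isMultiplicative_sigma (k := 1)).map_mul_of_coprime hc
  rw [hmul] at hsig
  have h25 : ArithmeticFunction.sigma 1 (5 ^ 2) = 31 := by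
    rw [show (5 ^ 2 : ℕ) = 25 by norm_num, ArithmeticFunction.sigma_one_apply,
      show Nat.divisors 25 = {1, 5, 25} from rfl]
    rfl
  rw [h25] at hsig
  -- 31 * σ(Q^2) = 45 * Q^2
  have key : 31 * ArithmeticFunction.sigma 1 (Q ^ 2) = 45 * Q ^ 2 := by omega
  have h31 : (31 : ℕ) ∣ Q ^ 2 := by
    have hd : (31 : ℕ) ∣ 45 * Q ^ 2 := ⟨_, key.symm⟩
    exact (Nat.Coprime.dvd_of_dvd_mul_left (by norm_num) hd)
  clear hsig key hmul h25 hc hc5 hcop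
  obtain ⟨m, hm⟩ := hQodd
  have hsq : Q ^ 2 = 4 * (m * (m + 1)) + 1 := by subst hm; ring
  obtain ⟨k, hk⟩ := Nat.even_mul_succ_self m
  have h8 : Q ^ 2 % 8 = 1 := by omega
  obtain ⟨j, hj⟩ := h31
  have hj8 : j % 8 = 7 := by omega
  exact ⟨j / 8, by omega, by omega⟩
end
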